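/- The dihedral group Dih_n (n ≥ 3) has exactly Σ_{d | n} (1 + d) subgroups, where the sum ranges over all positive divisors d of n. -/

import Mathlib

/-!
A subgroup `H` of `Dih_n` is determined by its rotation part `K = {i | ρ^i ∈ H}` and its set of
reflections, which is either empty or, because `(πρ^i)(πρ^j) = ρ^(j-i)`, a single coset of `K`.
So the subgroups with rotation part `K` are counted by `Option (ℤ/n ⧸ K)`, that is, there are
`1 + [ℤ/n : K]` of them. A subgroup of the cyclic group `ℤ/n` is determined by its order, hence by
its index, and the indices that occur are exactly the divisors of `n`.
-/

theorem IsAddCyclic.addSubgroup_eq_of_card_eq {α : Type*} [AddGroup α] [Finite α] [IsAddCyclic α]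
    {H K : AddSubgroup α} (h : Nat.card H = Nat.card K) : H = K := by
  classical
  have := Fintype.ofFinite α
  -- both subgroups fill up the solution set of `d • x = 0`, which has at most `d` elements
  have key : ∀ L : AddSubgroup α, Nat.card L = Nat.card H →
      (L : Set α).toFinset = Finset.univ.filter (fun x => Nat.card H • x = 0) := by
    intro L hL
    apply Finset.eq_of_subset_of_card_le
    · intro x hx
      rw [Set.mem_toFinset, SetLike.mem_coe] at hx
      rw [Finset.mem_filter_univ, ← hL]
      exact addOrderOf_dvd_iff_nsmul_eq_zero.mp (L.addOrderOf_dvd_natCard hx)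
    · rw [Set.toFinset_card, ← Nat.card_eq_fintype_card, SetLike.coe_sort_coe, hL]
      exact IsAddCyclic.card_nsmul_eq_zero_le Nat.card_pos
  exact SetLike.coe_injective (Set.toFinset_inj.mp ((key H rfl).trans (key K h.symm).symm))

namespace ZMod

variable {n : ℕ}

lemma index_zmultiples_natCast {d : ℕ} (hn : n ≠ 0) (hd : d ∣ n) :
    (AddSubgroup.zmultiples (d : ZMod n)).index = d := by
  have hcard := (AddSubgroup.zmultiples (d : ZMod n)).index_mul_card
  rw [Nat.card_zmultiples, addOrderOf_coe _ hn, Nat.gcd_eq_right hd, Nat.card_zmod] at hcard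
  have hdpos : 0 < d := Nat.pos_of_dvd_of_pos hd (Nat.pos_of_ne_zero hn)
  exact Nat.eq_of_mul_eq_mul_right (Nat.div_pos (Nat.le_of_dvd (Nat.pos_of_ne_zero hn) hd) hdpos)
    (hcard.trans (Nat.mul_div_cancel' hd).symm)

lemma sum_addSubgroup_index [NeZero n] {M : Type*} [AddCommMonoid M] (f : ℕ → M) :
    ∑ K : AddSubgroup (ZMod n), f K.index = ∑ d ∈ n.divisors, f d := by
  have hn : n ≠ 0 := NeZero.ne n
  refine Finset.sum_bij (fun K _ => K.index) (fun K _ => ?_) (fun K _ L _ hKL => ?_)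
    (fun d hd => ?_) (fun _ _ => rfl)
  · simpa [Nat.card_zmod, hn] using K.index_dvd_card
  · apply IsAddCyclic.addSubgroup_eq_of_card_eq
    have hK := K.index_mul_card
    rw [hKL, ← L.index_mul_card] at hK
    exact Nat.eq_of_mul_eq_mul_left (Nat.pos_of_ne_zero L.index_ne_zero_of_finite) hK
  · exact ⟨_, Finset.mem_univ _, index_zmultiples_natCast hn (Nat.dvd_of_mem_divisors hd)⟩

end ZMod

namespace DihedralGroup

variable {n : ℕ}

def rotations (H : Subgroup (DihedralGroup n)) : AddSubgroup (ZMod n) where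
  carrier := {i | r i ∈ H}
  zero_mem' := H.one_mem
  add_mem' ha hb := by simpa using H.mul_mem ha hb
  neg_mem' ha := by simpa using H.inv_mem ha

@[simp] lemma mem_rotations {H : Subgroup (DihedralGroup n)} {i : ZMod n} :
    i ∈ rotations H ↔ r i ∈ H := Iff.rfl

lemma sr_mem_iff_of_sr_mem {H : Subgroup (DihedralGroup n)} {i j : ZMod n} (hi : sr i ∈ H) :
    sr j ∈ H ↔ (j : ZMod n ⧸ rotations H) = i := by
  rw [QuotientAddGroup.eq_iff_sub_mem, mem_rotations, ← sr_mul_sr, H.mul_mem_cancel_left hi]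

def ofRotations (K : AddSubgroup (ZMod n)) (o : Option (ZMod n ⧸ K)) :
    Subgroup (DihedralGroup n) where
  carrier := {g | match g with
    | r i => i ∈ K
    | sr j => o = some (j : ZMod n ⧸ K)}
  one_mem' := K.zero_mem
  mul_mem' := by
    rintro (a | a) (b | b) ha hb
    · exact K.add_mem ha hb
    · show o = some ((b - a : ZMod n) : ZMod n ⧸ K)
      rwa [QuotientAddGroup.mk_sub, (QuotientAddGroup.eq_zero_iff a).mpr ha, sub_zero]
    · show o = some ((a + b : ZMod n) : ZMod n ⧸ K)
      rwa [QuotientAddGroup.mk_add, (QuotientAddGroup.eq_zero_iff b).mpr hb, add_zero]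
    · exact QuotientAddGroup.eq_iff_sub_mem.mp (Option.some_injective _ (hb.symm.trans ha))
  inv_mem' := by
    rintro (a | a) ha
    · exact K.neg_mem ha
    · exact ha

@[simp] lemma sr_mem_ofRotations {K : AddSubgroup (ZMod n)} {o : Option (ZMod n ⧸ K)}
    {j : ZMod n} : sr j ∈ ofRotations K o ↔ o = some (j : ZMod n ⧸ K) := Iff.rfl

lemma rotations_ofRotations (K : AddSubgroup (ZMod n)) (o : Option (ZMod n ⧸ K)) :
    rotations (ofRotations K o) = K := rfl

lemma ofRotations_injective (K : AddSubgroup (ZMod n)) : Function.Injective (ofRotations K) := by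
  intro o o' h
  refine Option.ext fun c => ?_
  obtain ⟨j, rfl⟩ := QuotientAddGroup.mk_surjective c
  simpa only [sr_mem_ofRotations] using SetLike.ext_iff.mp h (sr j)

lemma exists_ofRotations (H : Subgroup (DihedralGroup n)) :
    ∃ o, ofRotations (rotations H) o = H := by
  by_cases h : ∃ i, sr i ∈ H
  · obtain ⟨i, hi⟩ := h
    refine ⟨some i, SetLike.ext ?_⟩
    rintro (j | j)
    · rfl
    · rw [sr_mem_ofRotations, sr_mem_iff_of_sr_mem hi, Option.some_inj, eq_comm]
  · refine ⟨none, SetLike.ext ?_⟩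
    rintro (j | j)
    · rfl
    · simpa using fun hj => h ⟨j, hj⟩

noncomputable def optionQuotientEquivFiber (K : AddSubgroup (ZMod n)) :
    Option (ZMod n ⧸ K) ≃ {H : Subgroup (DihedralGroup n) // rotations H = K} :=
  Equiv.ofBijective (fun o => ⟨ofRotations K o, rotations_ofRotations K o⟩) <| by
    refine ⟨fun o o' h => ofRotations_injective K (congrArg Subtype.val h), ?_⟩
    rintro ⟨H, rfl⟩
    obtain ⟨o, ho⟩ := exists_ofRotations H
    exact ⟨o, Subtype.ext ho⟩

theorem card_subgroup [NeZero n] :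
    Nat.card (Subgroup (DihedralGroup n)) = ∑ K : AddSubgroup (ZMod n), (1 + K.index) := by
  rw [← Nat.card_congr (Equiv.sigmaFiberEquiv rotations), Nat.card_sigma]
  refine Finset.sum_congr rfl fun K _ => ?_
  rw [← Nat.card_congr (optionQuotientEquivFiber K), Finite.card_option, AddSubgroup.index,
    add_comm]

end DihedralGroup

theorem stmt10 (n : ℕ) (hn : 3 ≤ n) :
    Nat.card (Subgroup (DihedralGroup n)) = ∑ d ∈ n.divisors, (1 + d) := by
  have : NeZero n := ⟨by omega⟩
  exact DihedralGroup.card_subgroup.trans (ZMod.sum_addSubgroup_index (1 + ·))
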